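/- Define a sequence of words in the free group F₂ on x, y by: w₀ = [x, y], w₁ = [w₀, x], w₂ = [w₁, y w₁ y⁻¹], and in general w_{2i-1} = [w_{2i-2}, x^i] and w_{2i} = [w_{2i-1}, y w_{2i-1} y⁻¹]. Then every word w_n in this sequence is a non-trivial element of F₂. -/

import Mathlib

open scoped commutatorElement

/-- The generators of the free group `F₂`. -/
def thomX : FreeGroup (Fin 2) := FreeGroup.of 0
def thomY : FreeGroup (Fin 2) := FreeGroup.of 1

/-- Thom's sequence of words: `w₀ = [x,y]`, `w_{2i-1} = [w_{2i-2}, xⁱ]`,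
`w_{2i} = [w_{2i-1}, y w_{2i-1} y⁻¹]`. -/
def thomW : ℕ → FreeGroup (Fin 2)
  | 0 => ⁅thomX, thomY⁆
  | n + 1 =>
    if (n + 1) % 2 = 1 then ⁅thomW n, thomX ^ ((n + 2) / 2)⁆
    else ⁅thomW n, thomY * thomW n * thomY⁻¹⁆

namespace ThomAux

abbrev Letter := Fin 2 × Bool

def pred (p q : Letter) : Prop := ¬(p.1 = q.1 ∧ p.2 = !q.2)

instance : ∀ p q : Letter, Decidable (pred p q) := fun p q =>
  inferInstanceAs (Decidable ¬(p.1 = q.1 ∧ p.2 = !q.2))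

lemma reduce_eq_self : ∀ {L : List Letter}, List.Chain' pred L → FreeGroup.reduce L = L := by
  intro L h
  induction L with
  | nil => rfl
  | cons p L ih =>
    rw [FreeGroup.reduce.cons, ih h.tail]
    cases L with
    | nil => rfl
    | cons q t =>
      have hp : pred p q := (List.isChain_cons_cons.mp h).1
      show (if p.1 = q.1 ∧ p.2 = !q.2 then t else p :: q :: t) = p :: q :: t
      rw [if_neg hp]

lemma mk_ne_one {L : List Letter} (h : List.Chain' pred L) (hne : L ≠ []) :
    FreeGroup.mk L ≠ 1 := by
  intro h1
  have h2 : (FreeGroup.mk L).toWord = [] := FreeGroup.toWord_eq_nil_iff.mpr h1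
  rw [FreeGroup.toWord_mk, reduce_eq_self h] at h2
  exact hne h2

lemma chain'_invRev {L : List Letter} (h : List.Chain' pred L) :
    List.Chain' pred (FreeGroup.invRev L) := by
  unfold FreeGroup.invRev
  show List.IsChain _ _
  rw [List.isChain_reverse]
  refine List.isChain_map_of_isChain _ ?_ h
  rintro p q hpq ⟨h1, h2⟩
  simp only [Bool.not_not] at h2
  exact hpq ⟨h1.symm, h2.symm⟩

lemma head?_invRev {L : List Letter} {c : Letter} (h : L.getLast? = some c) :
    (FreeGroup.invRev L).head? = some (c.1, !c.2) := by
  unfold FreeGroup.invRev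
  rw [List.head?_reverse, List.getLast?_map, h]; rfl

lemma getLast?_invRev {L : List Letter} {c : Letter} (h : L.head? = some c) :
    (FreeGroup.invRev L).getLast? = some (c.1, !c.2) := by
  unfold FreeGroup.invRev
  rw [List.getLast?_reverse, List.head?_map, h]; rfl

lemma chain'_append' {l₁ l₂ : List Letter} {c d : Letter} (h₁ : List.Chain' pred l₁)
    (h₂ : List.Chain' pred l₂) (hc : l₁.getLast? = some c) (hd : l₂.head? = some d)
    (hcd : pred c d) : List.Chain' pred (l₁ ++ l₂) := by
  refine h₁.append h₂ ?_
  intro x hx y hy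
  rw [hc, Option.mem_def, Option.some_inj] at hx
  rw [hd, Option.mem_def, Option.some_inj] at hy
  subst hx; subst hy; exact hcd

lemma getLast?_append' {l₁ l₂ : List Letter} {c : Letter} (h : l₂.getLast? = some c) :
    (l₁ ++ l₂).getLast? = some c := by
  rw [List.getLast?_append_of_ne_nil _ (by rintro rfl; simp at h), h]

/-- letters -/
abbrev la : Letter := ((0 : Fin 2), true)
abbrev lA : Letter := ((0 : Fin 2), false)
abbrev lb : Letter := ((1 : Fin 2), true)
abbrev lB : Letter := ((1 : Fin 2), false)

lemma key (n : ℕ) : ∃ L : List Letter, thomW n = FreeGroup.mk L ∧ List.Chain' pred L ∧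
    L.head? = some la ∧ L.getLast? = some (if n % 2 = 0 then lB else lA) := by
  induction n with
  | zero =>
    refine ⟨[la, lb, lA, lB], ?_,
      List.isChain_cons_cons.mpr ⟨by decide, List.isChain_cons_cons.mpr ⟨by decide,
        List.isChain_cons_cons.mpr ⟨by decide, List.isChain_singleton _⟩⟩⟩, rfl, rfl⟩
    show ⁅thomX, thomY⁆ = _
    rw [commutatorElement_def]
    have hx : thomX = FreeGroup.mk [la] := rfl
    have hy : thomY = FreeGroup.mk [lb] := rfl
    rw [hx, hy, FreeGroup.inv_mk, FreeGroup.inv_mk]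
    rw [FreeGroup.mul_mk, FreeGroup.mul_mk, FreeGroup.mul_mk]
    rfl
  | succ n ih =>
    obtain ⟨L, hL, hc, hh, hl⟩ := ih
    rcases Nat.mod_two_eq_zero_or_one n with hn0 | hn0
    · -- n even : odd step
      have hn1 : (n + 1) % 2 = 1 := by omega
      rw [if_pos hn0] at hl
      set m := (n + 2) / 2 with hm
      obtain ⟨k, hk⟩ : ∃ k, m = k + 1 := ⟨m - 1, by omega⟩
      set R : List Letter := List.replicate m la with hR
      have hRmk : thomX ^ m = FreeGroup.mk R := by
        rw [show thomX = FreeGroup.of 0 from rfl,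
          ← FreeGroup.mk_toWord (x := FreeGroup.of (0 : Fin 2) ^ m), FreeGroup.toWord_of_pow, hR]
      have hRc : List.Chain' pred R := List.isChain_replicate_of_rel m (by decide)
      have hRh : R.head? = some la := by rw [hR, hk, List.replicate_succ]; rfl
      have hRl : R.getLast? = some la := by
        rw [hR, hk, List.replicate_succ']; exact List.getLast?_concat
      have hiRL : FreeGroup.invRev R = List.replicate m lA := by
        simp [FreeGroup.invRev, hR, lA, la]
      have hiRc : List.Chain' pred (FreeGroup.invRev R) := chain'_invRev hRc
      have hiRh : (FreeGroup.invRev R).head? = some lA := head?_invRev hRl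
      have hiRl : (FreeGroup.invRev R).getLast? = some lA := getLast?_invRev hRh
      refine ⟨L ++ R ++ FreeGroup.invRev L ++ FreeGroup.invRev R, ?_, ?_, ?_, ?_⟩
      · show thomW (n + 1) = _
        rw [thomW, if_pos hn1, commutatorElement_def, hL, hRmk, FreeGroup.inv_mk,
          FreeGroup.inv_mk, FreeGroup.mul_mk, FreeGroup.mul_mk, FreeGroup.mul_mk]
      · refine chain'_append' (chain'_append' (chain'_append' hc hRc hl hRh (by decide))
          (chain'_invRev hc) (getLast?_append' hRl) (head?_invRev hl) (by decide))
          hiRc (getLast?_append' (getLast?_invRev hh)) hiRh (by decide)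
      · cases L with
        | nil => simp at hh
        | cons p t => simp only [List.head?_cons, Option.some_inj] at hh; subst hh; rfl
      · rw [if_neg (by omega)]
        exact getLast?_append' hiRl
    · -- n odd : even step
      have hn1 : ¬((n + 1) % 2 = 1) := by omega
      rw [if_neg (by omega)] at hl
      have hy : thomY = FreeGroup.mk [lb] := rfl
      have hiLc : List.Chain' pred (FreeGroup.invRev L) := chain'_invRev hc
      have hiLh : (FreeGroup.invRev L).head? = some la := by
        have := head?_invRev hl; simpa [lA, la] using this
      have hiLl : (FreeGroup.invRev L).getLast? = some lA := by
        have := getLast?_invRev hh; simpa [lA, la] using this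
      refine ⟨L ++ [lb] ++ L ++ [lB] ++ FreeGroup.invRev L ++ [lb] ++ FreeGroup.invRev L
        ++ [lB], ?_, ?_, ?_, ?_⟩
      · show thomW (n + 1) = _
        rw [thomW, if_neg hn1, commutatorElement_def, hL, hy]
        rw [mul_inv_rev, mul_inv_rev, inv_inv]
        simp only [FreeGroup.inv_mk, FreeGroup.mul_mk, ← List.append_assoc]
        have : FreeGroup.invRev [lb] = [lB] := rfl
        rw [this]
      · refine chain'_append' (chain'_append' (chain'_append' (chain'_append'
          (chain'_append' (chain'_append' (chain'_append' hc (List.isChain_singleton _) hl rfl (by decide))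
            hc (List.getLast?_concat) hh (by decide))
            (List.isChain_singleton _) (getLast?_append' hl) rfl (by decide))
            hiLc (List.getLast?_concat) hiLh (by decide))
            (List.isChain_singleton _) (getLast?_append' hiLl) rfl (by decide))
            hiLc (List.getLast?_concat) hiLh (by decide))
            (List.isChain_singleton _) (getLast?_append' hiLl) rfl (by decide)
      · cases L with
        | nil => simp at hh
        | cons p t => simp only [List.head?_cons, Option.some_inj] at hh; subst hh; rfl
      · rw [if_pos (by omega)]
        exact List.getLast?_concat

end ThomAux

/-- Every word in Thom's sequence is a non-trivial element of `F₂`. -/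
theorem stmt_8 (n : ℕ) : thomW n ≠ 1 := by
  obtain ⟨L, hL, hc, hh, -⟩ := ThomAux.key n
  rw [hL]
  exact ThomAux.mk_ne_one hc (by rintro rfl; simp at hh)
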